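/- Let H be the layered auxiliary graph constructed from G with delay bound D (with D copies v^1,…,v^D of each non-root vertex v, edges (v_j^i, v_l^{i+d(e)}) of cost c(e) for each edge e=(v_j,v_l) of G and each feasible layer i, edges (r, v_l^{d(e)}) of cost c(e) for edges incident to r, and an extra terminal copy of each terminal of S∖{r} joined by cost-0 edges from all of its D layer copies), and let S_H be its terminal set. If R' is a Steiner tree of G spanning S in which the delay from r to every vertex of R' is at most D and whose total cost is C, then there exists a directed Steiner tree rooted at r spanning S_H in H with total cost at most C. -/

import Mathlib

/-!
Common framework.

A directed graph on a type `α` is given by a finite set of directed edges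
`Finset (α × α)`.  A directed Steiner tree (arborescence) rooted at `r`
spanning a terminal set `T` is a finite edge set `R` such that no edge enters
the root, every vertex has in-degree at most one, the tail of every edge is
reachable from `r` inside `R` (hence every vertex of `R` is reachable from
`r` by a unique directed path), and every terminal of `T` is reachable
from `r` in `R`.
-/

/-- `b` is reachable from `a` using the directed edges of `R`. -/
def Reaches {α : Type*} (R : Finset (α × α)) (a b : α) : Prop :=
  Relation.ReflTransGen (fun x y => (x, y) ∈ R) a b

/-- `R` is a directed Steiner tree rooted at `r` spanning the terminal set `T`. -/
def IsDirSteinerTree {α : Type*} [DecidableEq α] (R : Finset (α × α)) (r : α)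
    (T : Finset α) : Prop :=
  (∀ e ∈ R, e.2 ≠ r) ∧
  (∀ v : α, (R.filter fun e => e.2 = v).card ≤ 1) ∧
  (∀ e ∈ R, Reaches R r e.1) ∧
  (∀ t ∈ T, Reaches R r t)

/-- The total cost of the edge set `R` under the edge-cost function `c`. -/
def treeCost {α : Type*} (c : α × α → ℕ) (R : Finset (α × α)) : ℕ :=
  ∑ e ∈ R, c e

/-- `x` is a vertex of the edge set `R` (an endpoint of some edge of `R`). -/
def MemVerts {α : Type*} (R : Finset (α × α)) (x : α) : Prop :=
  ∃ e ∈ R, e.1 = x ∨ e.2 = x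

/-- `R` is a minimum-cost directed Steiner tree rooted at `r` spanning `T`
inside the directed graph with edge set `Edges`, w.r.t. the cost `c`. -/
def IsMinDirSteinerTree {α : Type*} [DecidableEq α] (c : α × α → ℕ)
    (Edges R : Finset (α × α)) (r : α) (T : Finset α) : Prop :=
  R ⊆ Edges ∧ IsDirSteinerTree R r T ∧
    ∀ R' ⊆ Edges, IsDirSteinerTree R' r T → treeCost c R ≤ treeCost c R'

/-- `b` is reachable from `a` in `R` by a directed path of total delay
exactly `k` (delays given by `d`). -/
def DelayReaches {α : Type*} (R : Finset (α × α)) (d : α × α → ℕ)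
    (a b : α) (k : ℕ) : Prop :=
  Relation.ReflTransGen
    (fun p q : α × ℕ => (p.1, q.1) ∈ R ∧ q.2 = p.2 + d (p.1, q.1))
    (a, 0) (b, k)

/-- Vertices of the layered auxiliary graph `H` built from a graph on `V`:
`Sum.inl r` is the root, `Sum.inl v` (for a terminal `v ≠ r`) is the extra
terminal copy of `v`, and `Sum.inr (v, i)` is the layer copy `v^i`
(meaningful for `1 ≤ i ≤ D`). -/
abbrev AuxV (V : Type*) := V ⊕ (V × ℕ)

/-- The edge set of the layered auxiliary graph `H`:
* for every edge `e = (v_j, v_l) ∈ E` not incident to the root `r` and every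
  layer `i` with `1 ≤ i` and `i + d e ≤ D`, a directed edge
  `(v_j^i, v_l^{i+d e})`;
* for every edge `(r, v_l) ∈ E` (with `d e ≤ D`), a directed edge
  `(r, v_l^{d e})`;
* for every terminal `v ∈ S \ {r}` and every `1 ≤ i ≤ D`, a directed edge
  `(v^i, v)` into the extra terminal copy of `v`. -/
def auxEdges {V : Type*} [DecidableEq V] (E : Finset (V × V)) (d : V × V → ℕ)
    (S : Finset V) (r : V) (D : ℕ) : Finset (AuxV V × AuxV V) :=
  (((E.filter fun e => e.1 ≠ r ∧ e.2 ≠ r) ×ˢ Finset.Icc 1 D).filter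
      fun p => p.2 + d p.1 ≤ D).image
    (fun p => (Sum.inr (p.1.1, p.2), Sum.inr (p.1.2, p.2 + d p.1)))
  ∪ (E.filter fun e => e.1 = r ∧ e.2 ≠ r ∧ d e ≤ D).image
      (fun e => (Sum.inl r, Sum.inr (e.2, d e)))
  ∪ ((S.erase r) ×ˢ Finset.Icc 1 D).image
      (fun p => (Sum.inr (p.1, p.2), Sum.inl p.1))

/-- Costs of the edges of the auxiliary graph: an edge between copies of `a`
and `b` inherits the cost `c (a, b)` of the underlying edge of `G`; the
edges into the extra terminal copies have cost `0`. -/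
def auxCost {V : Type*} (c : V × V → ℕ) : AuxV V × AuxV V → ℕ
  | (Sum.inr (a, _), Sum.inr (b, _)) => c (a, b)
  | (Sum.inl a, Sum.inr (b, _)) => c (a, b)
  | _ => 0

/-- The terminal set `S_H` of the auxiliary graph: the root `Sum.inl r`
together with the extra terminal copies `Sum.inl v`, `v ∈ S \ {r}`;
i.e. the image of `S` under `Sum.inl`. -/
def auxTerminals {V : Type*} [DecidableEq V] (S : Finset V) : Finset (AuxV V) :=
  S.image Sum.inl

/-- The projection of an edge set `R` of the auxiliary graph back to `G`:
the set of all edges `(v_j, v_l)` of `G` some copy of which belongs to `R`. -/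
def projTree {V : Type*} [DecidableEq V] (R : Finset (AuxV V × AuxV V)) :
    Finset (V × V) :=
  R.biUnion fun p =>
    match p with
    | (Sum.inr (a, _), Sum.inr (b, _)) => {(a, b)}
    | (Sum.inl a, Sum.inr (b, _)) => {(a, b)}
    | _ => ∅

/-!
Since every vertex of the tree has in-degree at most one and no edge enters `r`, the delay `K x`
of a vertex `x` from `r` along the tree is well defined. Send `r` to itself and every other tree
vertex `x` to its copy `x^{K x}`: positive delays give `1 ≤ K x`, the delay bound gives `K x ≤ D`,
and a tree edge `(u, x)` becomes the auxiliary edge from layer `K u` to layer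
`K u + d (u, x) = K x`, of the same cost. This relabelling is injective, so the image is again an
arborescence, and each extra terminal copy `v` hangs below `v^{K v}` by an edge of cost `0`.
-/

open Function

section Arborescence

variable {α β : Type*} [DecidableEq α] {R P : Finset (α × α)} {r a b : α} {T T' : Finset α}

theorem card_filter_snd_le_one_iff :
    (∀ v : α, (R.filter fun e => e.2 = v).card ≤ 1) ↔ Set.InjOn Prod.snd (R : Set (α × α)) := by
  refine ⟨fun h e he e' he' hee' => ?_, fun h v => Finset.card_le_one.mpr fun e he e' he' => ?_⟩
  · exact Finset.card_le_one.mp (h e.2) e (Finset.mem_filter.mpr ⟨he, rfl⟩) e'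
      (Finset.mem_filter.mpr ⟨he', hee'.symm⟩)
  · rw [Finset.mem_filter] at he he'
    exact h he.1 he'.1 (he.2.trans he'.2.symm)

omit [DecidableEq α] in
theorem Reaches.mono (hRP : R ⊆ P) (h : Reaches R a b) : Reaches P a b :=
  Relation.ReflTransGen.mono (fun _ _ hxy => hRP hxy) _ _ h

omit [DecidableEq α] in
theorem Reaches.image [DecidableEq β] (f : α → β) (h : Reaches R a b) :
    Reaches (R.image (Prod.map f f)) (f a) (f b) :=
  Relation.ReflTransGen.lift f
    (fun x y hxy => (Finset.mem_image_of_mem (Prod.map f f) hxy : (f x, f y) ∈ _)) _ _ h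

omit [DecidableEq α] in
theorem Reaches.exists_last_edge (h : Reaches R r a) (har : a ≠ r) :
    ∃ e ∈ R, e.2 = a ∧ Reaches R r e.1 := by
  rcases h.cases_tail with rfl | ⟨p, hp, hpa⟩
  · exact absurd rfl har
  · exact ⟨(p, a), hpa, rfl, hp⟩

theorem IsDirSteinerTree.mono_terminals (h : IsDirSteinerTree R r T) (hT : T' ⊆ T) :
    IsDirSteinerTree R r T' :=
  ⟨h.1, h.2.1, h.2.2.1, fun t ht => h.2.2.2 t (hT ht)⟩

theorem IsDirSteinerTree.image [DecidableEq β] {f : α → β} (hf : Injective f)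
    (h : IsDirSteinerTree R r T) :
    IsDirSteinerTree (R.image (Prod.map f f)) (f r) (T.image f) := by
  obtain ⟨hroot, hdeg, htail, hterm⟩ := h
  refine ⟨?_, card_filter_snd_le_one_iff.mpr ?_, ?_, ?_⟩
  · simp only [Finset.mem_image]
    rintro _ ⟨e, he, rfl⟩
    exact hf.ne (hroot e he)
  · simp only [Finset.coe_image]
    rintro _ ⟨e, he, rfl⟩ _ ⟨e', he', rfl⟩ hee'
    rw [card_filter_snd_le_one_iff.mp hdeg he he' (hf hee')]
  · simp only [Finset.mem_image]
    rintro _ ⟨e, he, rfl⟩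
    exact (htail e he).image f
  · simp only [Finset.mem_image]
    rintro _ ⟨t, ht, rfl⟩
    exact (hterm t ht).image f

theorem IsDirSteinerTree.union_leaves (h : IsDirSteinerTree R r T)
    (htail : ∀ e ∈ P, Reaches R r e.1) (hroot : ∀ e ∈ P, e.2 ≠ r)
    (hinj : Set.InjOn Prod.snd (P : Set (α × α))) (hnew : ∀ e ∈ R, ∀ e' ∈ P, e.2 ≠ e'.2) :
    IsDirSteinerTree (R ∪ P) r (T ∪ P.image Prod.snd) := by
  obtain ⟨hRroot, hdeg, hRtail, hterm⟩ := h
  have hRP : Disjoint (R : Set (α × α)) P :=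
    Set.disjoint_left.mpr fun e he he' => hnew e he e he' rfl
  refine ⟨?_, card_filter_snd_le_one_iff.mpr ?_, ?_, ?_⟩
  · simp only [Finset.mem_union]
    rintro e (he | he)
    exacts [hRroot e he, hroot e he]
  · rw [Finset.coe_union, Set.injOn_union hRP]
    exact ⟨card_filter_snd_le_one_iff.mp hdeg, hinj, hnew⟩
  · simp only [Finset.mem_union]
    rintro e (he | he)
    exacts [(hRtail e he).mono Finset.subset_union_left, (htail e he).mono Finset.subset_union_left]
  · simp only [Finset.mem_union, Finset.mem_image]
    rintro t (ht | ⟨e, he, rfl⟩)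
    · exact (hterm t ht).mono Finset.subset_union_left
    · exact ((htail e he).mono Finset.subset_union_left).tail (Finset.mem_union_right R he)

end Arborescence

section Delay

variable {α : Type*} {R : Finset (α × α)} {d : α × α → ℕ} {r a b x : α} {k₁ k₂ : ℕ}

/-- Junk value `0` when `x` is not reachable from `r`. -/
noncomputable def delayTo (R : Finset (α × α)) (d : α × α → ℕ) (r x : α) : ℕ :=
  sInf {k | DelayReaches R d r x k}

theorem Reaches.exists_delayReaches (h : Reaches R a b) : ∃ k, DelayReaches R d a b k := by
  induction h with
  | refl => exact ⟨0, Relation.ReflTransGen.refl⟩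
  | @tail b c _ hbc ih =>
    obtain ⟨k, hk⟩ := ih
    exact ⟨k + d (b, c), hk.tail ⟨hbc, rfl⟩⟩

theorem delayReaches_delayTo (h : Reaches R r x) : DelayReaches R d r x (delayTo R d r x) :=
  Nat.sInf_mem h.exists_delayReaches

theorem delayTo_self : delayTo R d r r = 0 :=
  Nat.sInf_eq_zero.mpr (Or.inl Relation.ReflTransGen.refl)

variable [DecidableEq α] (hroot : ∀ e ∈ R, e.2 ≠ r)
  (hdeg : ∀ v : α, (R.filter fun e => e.2 = v).card ≤ 1)
include hroot hdeg

/-- The last edge of a path from `r` to `x` is the only edge entering `x`, so by induction along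
the first path both paths coincide. -/
theorem DelayReaches.unique (h₁ : DelayReaches R d r x k₁) (h₂ : DelayReaches R d r x k₂) :
    k₁ = k₂ := by
  suffices ∀ p : α × ℕ, Relation.ReflTransGen
      (fun p q : α × ℕ => (p.1, q.1) ∈ R ∧ q.2 = p.2 + d (p.1, q.1)) (r, 0) p →
      ∀ k, DelayReaches R d r p.1 k → p.2 = k from this (x, k₁) h₁ k₂ h₂
  intro p hp
  induction hp with
  | refl =>
    intro k hk
    rcases hk.cases_tail with hk | ⟨q, _, hqr, _⟩
    · exact (Prod.mk.inj hk).2.symm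
    · exact absurd rfl (hroot _ hqr)
  | @tail b c _ hbc ih =>
    intro k hk
    rcases hk.cases_tail with hk | ⟨⟨q, j⟩, hq, hqc, hk⟩
    · exact absurd (Prod.mk.inj hk).1 (hroot _ hbc.1)
    · obtain rfl : q = b.1 :=
        (Prod.mk.inj (card_filter_snd_le_one_iff.mp hdeg hqc hbc.1 rfl)).1
      rw [hbc.2, ih j hq]
      exact hk.symm

theorem delayTo_eq (h : DelayReaches R d r x k₁) : delayTo R d r x = k₁ :=
  DelayReaches.unique hroot hdeg (Nat.sInf_mem (s := {k | DelayReaches R d r x k}) ⟨k₁, h⟩) h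

theorem delayTo_snd {e : α × α} (he : e ∈ R) (h : Reaches R r e.1) :
    delayTo R d r e.2 = delayTo R d r e.1 + d e :=
  delayTo_eq hroot hdeg ((delayReaches_delayTo h).tail ⟨he, rfl⟩)

theorem one_le_delayTo (hd : ∀ e ∈ R, 0 < d e) (hx : Reaches R r x) (hxr : x ≠ r) :
    1 ≤ delayTo R d r x := by
  obtain ⟨e, he, rfl, he₁⟩ := hx.exists_last_edge hxr
  rw [delayTo_snd hroot hdeg he he₁]
  exact le_add_left (hd e he)

end Delay

section Layering

variable {V : Type*} [DecidableEq V] {R' E : Finset (V × V)} {S : Finset V} {r : V}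
  {K : V → ℕ} {c d : V × V → ℕ} {D : ℕ}

def layerVertex (r : V) (K : V → ℕ) (x : V) : AuxV V :=
  if x = r then .inl r else .inr (x, K x)

theorem layerVertex_self : layerVertex r K r = .inl r := if_pos rfl

theorem layerVertex_of_ne {x : V} (hx : x ≠ r) : layerVertex r K x = .inr (x, K x) := if_neg hx

theorem layerVertex_injective : Injective (layerVertex r K) := by
  intro x y hxy
  unfold layerVertex at hxy
  split_ifs at hxy with hx hy hy <;> simp_all

def layeredTree (R' : Finset (V × V)) (S : Finset V) (r : V) (K : V → ℕ) :
    Finset (AuxV V × AuxV V) :=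
  R'.image (Prod.map (layerVertex r K) (layerVertex r K)) ∪
    (S.erase r).image fun v => (layerVertex r K v, .inl v)

theorem IsDirSteinerTree.layeredTree (h : IsDirSteinerTree R' r S) :
    IsDirSteinerTree (layeredTree R' S r K) (.inl r) (auxTerminals S) := by
  have himage := h.image (layerVertex_injective (r := r) (K := K))
  rw [layerVertex_self] at himage
  refine (himage.union_leaves ?_ ?_ ?_ ?_).mono_terminals ?_
  · simp only [Finset.mem_image]
    rintro _ ⟨v, hv, rfl⟩
    simpa only [layerVertex_self] using
      (h.2.2.2 v (Finset.mem_of_mem_erase hv)).image (layerVertex r K)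
  · simp only [Finset.mem_image]
    rintro _ ⟨v, hv, rfl⟩
    simpa using Finset.ne_of_mem_erase hv
  · simp only [Finset.coe_image]
    rintro _ ⟨v, -, rfl⟩ _ ⟨w, -, rfl⟩ hvw
    obtain rfl : v = w := Sum.inl_injective hvw
    rfl
  · simp only [Finset.mem_image]
    rintro _ ⟨e, he, rfl⟩ _ ⟨v, -, rfl⟩
    simp [layerVertex_of_ne (h.1 e he)]
  · intro t ht
    obtain ⟨v, hv, rfl⟩ := Finset.mem_image.mp ht
    by_cases hvr : v = r
    · subst hvr
      exact Finset.mem_union_left _ (Finset.mem_image.mpr ⟨v, hv, layerVertex_self⟩)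
    · exact Finset.mem_union_right _ (Finset.mem_image.mpr
        ⟨_, Finset.mem_image_of_mem _ (Finset.mem_erase.mpr ⟨hvr, hv⟩), rfl⟩)

theorem auxCost_map_layerVertex {e : V × V} (he : e.2 ≠ r) :
    auxCost c (Prod.map (layerVertex r K) (layerVertex r K) e) = c e := by
  obtain ⟨a, b⟩ := e
  by_cases ha : a = r
  · subst ha
    simp only [Prod.map, layerVertex_self, layerVertex_of_ne he, auxCost]
  · simp only [Prod.map, layerVertex_of_ne ha, layerVertex_of_ne he, auxCost]

theorem treeCost_layeredTree (hroot : ∀ e ∈ R', e.2 ≠ r) :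
    treeCost (auxCost c) (layeredTree R' S r K) = treeCost c R' := by
  have hleaf : ∀ v : V, auxCost c (layerVertex r K v, .inl v) = 0 := fun v => by
    unfold layerVertex; split_ifs <;> rfl
  unfold treeCost layeredTree
  rw [← Finset.sum_subset Finset.subset_union_left, Finset.sum_image, Finset.sum_congr rfl]
  · exact fun e he => auxCost_map_layerVertex (hroot e he)
  · exact fun e _ e' _ hee' => (layerVertex_injective.prodMap layerVertex_injective) hee'
  · intro a ha haR
    obtain ⟨v, -, rfl⟩ := Finset.mem_image.mp ((Finset.mem_union.mp ha).resolve_left haR)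
    exact hleaf v

theorem layeredTree_subset_auxEdges (hsub : R' ⊆ E) (h : IsDirSteinerTree R' r S)
    (hK₀ : K r = 0) (hK : ∀ e ∈ R', K e.2 = K e.1 + d e)
    (hKD : ∀ x, Reaches R' r x → x ≠ r → K x ∈ Finset.Icc 1 D) :
    layeredTree R' S r K ⊆ auxEdges E d S r D := by
  obtain ⟨hroot, -, htail, hterm⟩ := h
  intro a ha
  unfold layeredTree at ha
  unfold auxEdges
  rcases Finset.mem_union.mp ha with ha | ha
  · obtain ⟨e, he, rfl⟩ := Finset.mem_image.mp ha
    have he₂ : e.2 ≠ r := hroot e he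
    have hK₂ := hKD e.2 ((htail e he).tail he) he₂
    rw [Finset.mem_Icc, hK e he] at hK₂
    by_cases he₁ : e.1 = r
    · rw [he₁, hK₀, zero_add] at hK₂
      refine Finset.mem_union_left _ (Finset.mem_union_right _ (Finset.mem_image.mpr ⟨e, ?_, ?_⟩))
      · simp [hsub he, he₁, he₂, hK₂.2]
      · simp [Prod.map, layerVertex_of_ne he₂, he₁, layerVertex_self, hK e he, hK₀]
    · have hK₁ := hKD e.1 (htail e he) he₁
      rw [Finset.mem_Icc] at hK₁
      refine Finset.mem_union_left _ (Finset.mem_union_left _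
        (Finset.mem_image.mpr ⟨(e, K e.1), ?_, ?_⟩))
      · simp [hsub he, he₁, he₂, hK₁.1, hK₁.2, hK₂.2]
      · simp [Prod.map, layerVertex_of_ne he₁, layerVertex_of_ne he₂, hK e he]
  · obtain ⟨v, hv, rfl⟩ := Finset.mem_image.mp ha
    have hvr := Finset.ne_of_mem_erase hv
    refine Finset.mem_union_right _ (Finset.mem_image.mpr ⟨(v, K v), ?_, ?_⟩)
    · exact Finset.mem_product.mpr ⟨hv, hKD v (hterm v (Finset.mem_of_mem_erase hv)) hvr⟩
    · rw [layerVertex_of_ne hvr]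

end Layering

theorem aux_steiner_tree_of_delay_bounded_steiner_tree_general
    {V : Type*} [DecidableEq V]
    (E : Finset (V × V)) (S : Finset V) (r : V)
    (c : V × V → ℕ) (d : V × V → ℕ)
    (hd : ∀ e ∈ E, 0 < d e)
    (D : ℕ)
    (R' : Finset (V × V)) (C : ℕ)
    (hsub : R' ⊆ E)
    (htree : IsDirSteinerTree R' r S)
    (hdelay : ∀ x : V, MemVerts R' x → ∃ k ≤ D, DelayReaches R' d r x k)
    (hC : treeCost c R' = C) :
    ∃ R ⊆ auxEdges E d S r D,
      IsDirSteinerTree R (Sum.inl r) (auxTerminals S) ∧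
      treeCost (auxCost c) R ≤ C := by
  have ⟨hroot, hdeg, htail, _⟩ := htree
  have hlayer : ∀ x, Reaches R' r x → x ≠ r → delayTo R' d r x ∈ Finset.Icc 1 D := by
    intro x hx hxr
    refine Finset.mem_Icc.mpr ⟨one_le_delayTo hroot hdeg (fun e he => hd e (hsub he)) hx hxr, ?_⟩
    obtain ⟨e, he, rfl, -⟩ := hx.exists_last_edge hxr
    obtain ⟨k, hkD, hk⟩ := hdelay e.2 ⟨e, he, Or.inr rfl⟩
    exact (delayTo_eq hroot hdeg hk).trans_le hkD
  refine ⟨layeredTree R' S r (delayTo R' d r), ?_, htree.layeredTree, ?_⟩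
  · exact layeredTree_subset_auxEdges hsub htree delayTo_self
      (fun e he => delayTo_snd hroot hdeg he (htail e he)) hlayer
  · exact (treeCost_layeredTree hroot).trans_le hC.le

/-- second direction of Theorem 2 of the paper.
If `R'` is a Steiner tree of `G` rooted at `r` spanning `S` in which the
delay from `r` to every vertex of `R'` is at most `D`, and whose total cost
is `C`, then the layered auxiliary graph `H` contains a directed Steiner
tree rooted at `r` spanning the terminal set `S_H` whose total cost
is at most `C`. -/
theorem aux_steiner_tree_of_delay_bounded_steiner_tree
    {V : Type*} [Fintype V] [DecidableEq V]
    (E : Finset (V × V)) (S : Finset V) (r : V) (hr : r ∈ S)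
    (c : V × V → ℕ) (d : V × V → ℕ)
    (hc : ∀ e ∈ E, 0 < c e) (hd : ∀ e ∈ E, 0 < d e)
    (D : ℕ) (hD : 0 < D)
    (R' : Finset (V × V)) (C : ℕ)
    (hsub : R' ⊆ E)
    (htree : IsDirSteinerTree R' r S)
    (hdelay : ∀ x : V, MemVerts R' x → ∃ k ≤ D, DelayReaches R' d r x k)
    (hC : treeCost c R' = C) :
    ∃ R ⊆ auxEdges E d S r D,
      IsDirSteinerTree R (Sum.inl r) (auxTerminals S) ∧
      treeCost (auxCost c) R ≤ C :=
  aux_steiner_tree_of_delay_bounded_steiner_tree_general E S r c d hd D R' C hsub htree hdelay hC
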